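/- Let Φ be an N×N unitary matrix, f ∈ ℂ^N nonzero, and f̂ = Φ* f. Let K = supp(f) and S = supp(f̂). Then the Frobenius norm of the submatrix Φ_{K×S} (rows indexed by K, columns indexed by S) satisfies ‖Φ_{K×S}‖_F ≥ 1 (after normalizing ‖f‖₂ = 1). -/

import Mathlib

/-!
Since `f = Φ f̂` and `f̂` vanishes off `S`, Cauchy–Schwarz on the `i`-th row gives
`|f i|² ≤ (∑_{ℓ ∈ S} |Φ i ℓ|²) ‖f̂‖²`. Unitarity gives `‖f̂‖ = ‖f‖ = 1`, and summing over
`i ∈ K` yields `1 ≤ ‖Φ_{K×S}‖_F²`.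
-/

open Finset Matrix

section

variable {m n 𝕜 : Type*} [Fintype n] [RCLike 𝕜]

theorem Matrix.ofReal_sum_norm_sq_eq_star_dotProduct (v : n → 𝕜) :
    ((∑ i, ‖v i‖ ^ 2 : ℝ) : 𝕜) = star v ⬝ᵥ v := by
  simp [dotProduct, RCLike.conj_mul]

theorem Matrix.sum_norm_sq_mulVec_of_mem_unitaryGroup [DecidableEq n] {U : Matrix n n 𝕜}
    (hU : U ∈ unitaryGroup n 𝕜) (v : n → 𝕜) :
    ∑ i, ‖(U *ᵥ v) i‖ ^ 2 = ∑ i, ‖v i‖ ^ 2 := by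
  have h : star (U *ᵥ v) ⬝ᵥ (U *ᵥ v) = star v ⬝ᵥ v := by
    rw [star_mulVec, dotProduct_mulVec, vecMul_vecMul, ← star_eq_conjTranspose,
      Unitary.star_mul_self_of_mem hU, vecMul_one]
  rw [← ofReal_sum_norm_sq_eq_star_dotProduct, ← ofReal_sum_norm_sq_eq_star_dotProduct] at h
  exact_mod_cast h

theorem Matrix.norm_sq_mulVec_apply_le (A : Matrix m n 𝕜) {g : n → 𝕜} {S : Finset n}
    (hg : ∀ ℓ ∉ S, g ℓ = 0) (i : m) :
    ‖(A *ᵥ g) i‖ ^ 2 ≤ (∑ ℓ ∈ S, ‖A i ℓ‖ ^ 2) * ∑ ℓ ∈ S, ‖g ℓ‖ ^ 2 := by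
  have hsupp : (A *ᵥ g) i = ∑ ℓ ∈ S, A i ℓ * g ℓ :=
    (sum_subset (subset_univ S) fun ℓ _ hℓ => by simp [hg ℓ hℓ]).symm
  calc ‖(A *ᵥ g) i‖ ^ 2 ≤ (∑ ℓ ∈ S, ‖A i ℓ‖ * ‖g ℓ‖) ^ 2 := by
        rw [hsupp]
        gcongr
        exact (norm_sum_le _ _).trans_eq (by simp_rw [norm_mul])
    _ ≤ (∑ ℓ ∈ S, ‖A i ℓ‖ ^ 2) * ∑ ℓ ∈ S, ‖g ℓ‖ ^ 2 := sum_mul_sq_le_sq_mul_sq S _ _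

end

theorem stmt_1_general (N : ℕ) (Φ : Matrix (Fin N) (Fin N) ℂ)
    (hΦ : Φ ∈ Matrix.unitaryGroup (Fin N) ℂ)
    (f : Fin N → ℂ) (hnorm : ∑ i, ‖f i‖ ^ 2 = 1)
    (fhat : Fin N → ℂ) (hfhat : fhat = Φᴴ.mulVec f)
    (K : Finset (Fin N)) (hK : K = Finset.univ.filter (fun i => f i ≠ 0))
    (S : Finset (Fin N)) (hS : S = Finset.univ.filter (fun ℓ => fhat ℓ ≠ 0)) :
    1 ≤ Real.sqrt (∑ i ∈ K, ∑ ℓ ∈ S, ‖Φ i ℓ‖ ^ 2) := by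
  have hinv : Φ *ᵥ fhat = f := by
    rw [hfhat, mulVec_mulVec, ← star_eq_conjTranspose, Unitary.mul_star_self_of_mem hΦ,
      one_mulVec]
  have hK_sum : ∑ i ∈ K, ‖f i‖ ^ 2 = 1 := by
    rw [hK, sum_filter_of_ne fun i _ hi => by simpa using hi, hnorm]
  have hS_sum : ∑ ℓ ∈ S, ‖fhat ℓ‖ ^ 2 = 1 := by
    rw [hS, sum_filter_of_ne fun i _ hi => by simpa using hi, hfhat,
      sum_norm_sq_mulVec_of_mem_unitaryGroup (U := Φᴴ) (Unitary.star_mem hΦ), hnorm]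
  have hfhat_supp : ∀ ℓ ∉ S, fhat ℓ = 0 := fun ℓ hℓ => by simpa [hS] using hℓ
  rw [Real.one_le_sqrt, ← hK_sum]
  refine sum_le_sum fun i _ => ?_
  simpa [hinv, hS_sum] using Φ.norm_sq_mulVec_apply_le hfhat_supp i

/-- Frobenius norm of the support submatrix is at least 1. -/
theorem stmt_1 (N : ℕ) (Φ : Matrix (Fin N) (Fin N) ℂ)
    (hΦ : Φ ∈ Matrix.unitaryGroup (Fin N) ℂ)
    (f : Fin N → ℂ) (hf : f ≠ 0) (hnorm : ∑ i, ‖f i‖ ^ 2 = 1)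
    (fhat : Fin N → ℂ) (hfhat : fhat = Φᴴ.mulVec f)
    (K : Finset (Fin N)) (hK : K = Finset.univ.filter (fun i => f i ≠ 0))
    (S : Finset (Fin N)) (hS : S = Finset.univ.filter (fun ℓ => fhat ℓ ≠ 0)) :
    1 ≤ Real.sqrt (∑ i ∈ K, ∑ ℓ ∈ S, ‖Φ i ℓ‖ ^ 2) :=
  stmt_1_general N Φ hΦ f hnorm fhat hfhat K hK S hS
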